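/- Half-spaces are Class A minimizers: let n ≥ 1, r > 0, let ω ∈ ℝⁿ with ω ≠ 0, and let E := {x ∈ ℝⁿ : x · ω < 0}. Then E is a Class A minimizer for Per_r, i.e. for every open ball B ⊆ ℝⁿ and every measurable F ⊆ ℝⁿ with F \ (B ⊖ B_r) = E \ (B ⊖ B_r), one has Per_r(E, B) ≤ Per_r(F, B). -/

import Mathlib

open MeasureTheory Metric Set Filter Topology
open scoped RealInnerProductSpace ENNReal

noncomputable section

/-- The set of points of Lebesgue density one of `E`. -/
def densityOnePoints (n : ℕ) (E : Set (EuclideanSpace ℝ (Fin n))) :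
    Set (EuclideanSpace ℝ (Fin n)) :=
  {x | Tendsto (fun ρ : ℝ => volume (E ∩ ball x ρ) / volume (ball x ρ)) (𝓝[>] 0) (𝓝 1)}

/-- The `r`-perimeter `Per_r(E, Ω) = (1/(2r)) Lⁿ((∂E ⊕ B_r) ∩ Ω)`, where `E` is identified with
its points of density one, `∂E` is the topological boundary of that set, and
`A ⊕ B_r` is the open `r`-neighbourhood of `A`. -/
def perR (n : ℕ) (r : ℝ) (E Ω : Set (EuclideanSpace ℝ (Fin n))) : ℝ≥0∞ :=
  volume (Metric.thickening r (frontier (densityOnePoints n E)) ∩ Ω) / ENNReal.ofReal (2 * r)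

/-- The inner domain `D ⊖ B_r = {x ∈ D : dist(x, ∂D) ≥ r}`. -/
def innerDomain (n : ℕ) (r : ℝ) (D : Set (EuclideanSpace ℝ (Fin n))) :
    Set (EuclideanSpace ℝ (Fin n)) :=
  {x ∈ D | r ≤ Metric.infDist x (frontier D)}

/-- `E` is a minimizer of `Per_r` in `D`: it minimizes among measurable competitors that
coincide with `E` outside `D ⊖ B_r`. -/
def IsMinimizerPerR (n : ℕ) (r : ℝ) (E D : Set (EuclideanSpace ℝ (Fin n))) : Prop :=
  ∀ F : Set (EuclideanSpace ℝ (Fin n)), MeasurableSet F →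
    F \ innerDomain n r D = E \ innerDomain n r D → perR n r E D ≤ perR n r F D

/-!
Normalize `ω` to a unit vector `u`. The boundary of the density-one points `E*` of
`E = {⟪y, u⟫ < 0}` lies in the hyperplane `{⟪y, u⟫ = 0}`, because `E ⊆ E* ⊆ closure E`, so its
`r`-neighbourhood lies in the slab `{|⟪y, u⟫| < r}`. A competitor `F` agrees with `E` outside
`K = closedBall x (ρ - r) ⊇ B ⊖ B_r`, hence `F*` agrees with `E*` there. Every line parallel to `u`
runs from `F*` to its complement, so it meets `∂F*`. If it does so inside `K`, the `r`-neighbourhood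
of that point cuts out a segment of length `2r` inside the ball, at least the length of the slab's
slice; otherwise the crossing lies on the hyperplane and the slab's slice is contained in its
`r`-neighbourhood. Integrating over the lines (Fubini) compares the two perimeters.
-/

theorem exists_mem_frontier_of_continuous {X Y : Type*} [TopologicalSpace X] [PreconnectedSpace X]
    [TopologicalSpace Y] {f : X → Y} (hf : Continuous f) {s : Set Y} {a b : X} (ha : f a ∈ s)
    (hb : f b ∉ s) : ∃ t, f t ∈ frontier s := by
  obtain ⟨t, ht⟩ := nonempty_frontier_iff.2
    ⟨⟨a, show a ∈ f ⁻¹' s from ha⟩, fun h => hb (show b ∈ f ⁻¹' s from h ▸ mem_univ b)⟩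
  exact ⟨t, hf.frontier_preimage_subset s ht⟩

theorem infDist_sphere_le {E : Type*} [NormedAddCommGroup E] [NormedSpace ℝ E] [Nontrivial E]
    {x y : E} {ρ : ℝ} (h : dist y x ≤ ρ) : infDist y (sphere x ρ) ≤ ρ - dist y x := by
  obtain ⟨v, hv, hyx⟩ : ∃ v : E, ‖v‖ = 1 ∧ y - x = ‖y - x‖ • v := by
    rcases eq_or_ne y x with rfl | hne
    · obtain ⟨v, hv⟩ := exists_norm_eq E zero_le_one
      exact ⟨v, hv, by simp⟩
    · have hne' : y - x ≠ 0 := sub_ne_zero.2 hne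
      exact ⟨‖y - x‖⁻¹ • (y - x), norm_smul_inv_norm hne',
        (smul_inv_smul₀ (norm_ne_zero_iff.2 hne') _).symm⟩
  have hρ : 0 ≤ ρ := dist_nonneg.trans h
  rw [dist_eq_norm] at h ⊢
  calc infDist y (sphere x ρ) ≤ dist y (x + ρ • v) :=
        infDist_le_dist_of_mem (by simp [norm_smul, hv, abs_of_nonneg hρ])
    _ = ‖(‖y - x‖ - ρ) • v‖ := by
        rw [dist_eq_norm, sub_smul, ← hyx]
        congr 1
        abel
    _ = ρ - ‖y - x‖ := by
        rw [norm_smul, hv, mul_one, Real.norm_eq_abs, abs_of_nonpos (by linarith)]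
        ring

variable {n : ℕ}

local notation "ℝⁿ" => EuclideanSpace ℝ (Fin n)

theorem innerDomain_ball_subset_closedBall [Nontrivial ℝⁿ] (r : ℝ) {x : ℝⁿ} {ρ : ℝ} (hρ : 0 < ρ) :
    innerDomain n r (ball x ρ) ⊆ closedBall x (ρ - r) := by
  rintro y ⟨hy, hr⟩
  rw [frontier_ball x hρ.ne'] at hr
  have := infDist_sphere_le (mem_ball.1 hy).le
  rw [mem_closedBall]
  linarith

theorem densityOnePoints_inter_eq_of_inter_eq {E F U : Set ℝⁿ} (hU : IsOpen U)
    (h : E ∩ U = F ∩ U) : densityOnePoints n E ∩ U = densityOnePoints n F ∩ U := by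
  suffices ∀ y ∈ U, y ∈ densityOnePoints n E ↔ y ∈ densityOnePoints n F by
    ext y
    exact and_congr_left (this y)
  intro y hy
  obtain ⟨δ, hδ, hball⟩ := Metric.isOpen_iff.1 hU y hy
  refine tendsto_congr' ?_
  filter_upwards [Ioo_mem_nhdsGT hδ] with ρ hρ
  have hsub : ball y ρ = U ∩ ball y ρ :=
    (inter_eq_right.2 ((ball_subset_ball hρ.2.le).trans hball)).symm
  rw [hsub, ← inter_assoc, ← inter_assoc, h]

theorem interior_subset_densityOnePoints (E : Set ℝⁿ) : interior E ⊆ densityOnePoints n E := by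
  intro y hy
  obtain ⟨ε, hε, hball⟩ := Metric.isOpen_iff.1 isOpen_interior y hy
  refine tendsto_const_nhds.congr' ?_
  filter_upwards [Ioo_mem_nhdsGT hε] with ρ hρ
  rw [inter_eq_right.2 ((ball_subset_ball hρ.2.le).trans (hball.trans interior_subset)),
    ENNReal.div_self (measure_ball_pos volume y hρ.1).ne' measure_ball_lt_top.ne]

theorem densityOnePoints_subset_closure (E : Set ℝⁿ) : densityOnePoints n E ⊆ closure E := by
  intro y hy
  by_contra hyE
  obtain ⟨ε, hε, hball⟩ := Metric.isOpen_iff.1 isClosed_closure.isOpen_compl y hyE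
  have hzero : Tendsto (fun ρ => volume (E ∩ ball y ρ) / volume (ball y ρ)) (𝓝[>] 0) (𝓝 0) := by
    refine tendsto_const_nhds.congr' ?_
    filter_upwards [Ioo_mem_nhdsGT hε] with ρ hρ
    have hdisj : Disjoint E (ball y ρ) := disjoint_compl_right.mono_right
      ((ball_subset_ball hρ.2.le).trans (hball.trans (compl_subset_compl.2 subset_closure)))
    rw [hdisj.inter_eq, measure_empty, ENNReal.zero_div]
  exact zero_ne_one (tendsto_nhds_unique hzero hy)

theorem frontier_densityOnePoints_subset (E : Set ℝⁿ) :
    frontier (densityOnePoints n E) ⊆ frontier E := fun _ hy =>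
  ⟨closure_minimal (densityOnePoints_subset_closure E) isClosed_closure hy.1,
    fun h => hy.2 (interior_maximal (interior_subset_densityOnePoints E) isOpen_interior h)⟩

theorem abs_inner_sub_inner_le_dist {u : ℝⁿ} (hu : ‖u‖ = 1) (z w : ℝⁿ) :
    |⟪z, u⟫ - ⟪w, u⟫| ≤ dist z w := by
  simpa [← inner_sub_left, hu, dist_eq_norm] using abs_real_inner_le_norm (z - w) u

theorem thickening_hyperplane_subset {u : ℝⁿ} (hu : ‖u‖ = 1) (r : ℝ) :
    thickening r {z : ℝⁿ | ⟪z, u⟫ = 0} ⊆ {z | |⟪z, u⟫| < r} := fun z hz => by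
  obtain ⟨w, hw, hzw⟩ := mem_thickening_iff.1 hz
  have := abs_inner_sub_inner_le_dist hu z w
  rw [show ⟪w, u⟫ = 0 from hw, sub_zero] at this
  exact this.trans_lt hzw

theorem exists_orthonormalBasis_apply_zero_eq {k : ℕ} {u : EuclideanSpace ℝ (Fin (k + 1))}
    (hu : ‖u‖ = 1) : ∃ b : OrthonormalBasis (Fin (k + 1)) ℝ (EuclideanSpace ℝ (Fin (k + 1))),
      b 0 = u := by
  have horth : Orthonormal ℝ (({0} : Set (Fin (k + 1))).domRestrict fun _ => u) :=
    ⟨fun _ => hu, fun i j hij => (hij (Subtype.ext (i.2.trans j.2.symm))).elim⟩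
  obtain ⟨b, hb⟩ := horth.exists_orthonormalBasis_extension_of_card_eq
    (by rw [finrank_euclideanSpace_fin, Fintype.card_fin])
  exact ⟨b, hb 0 rfl⟩

theorem volume_le_of_forall_line_slice_le {u : ℝⁿ} (hu : ‖u‖ = 1) {A B : Set ℝⁿ}
    (hA : MeasurableSet A) (hB : MeasurableSet B)
    (h : ∀ y, ⟪y, u⟫ = 0 → volume {t : ℝ | y + t • u ∈ A} ≤ volume {t : ℝ | y + t • u ∈ B}) :
    volume A ≤ volume B := by
  obtain ⟨k, rfl⟩ : ∃ k, n = k + 1 :=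
    Nat.exists_eq_succ_of_ne_zero (by rintro rfl; simp [Subsingleton.elim u 0] at hu)
  obtain ⟨b, rfl⟩ := exists_orthonormalBasis_apply_zero_eq hu
  -- `Ψ (t, p)` is the point with `b`-coordinates `(t, p)`: it parametrizes the lines along `b 0`.
  let Ψ : ℝ × (Fin k → ℝ) → EuclideanSpace ℝ (Fin (k + 1)) :=
    fun q => b.repr.symm (WithLp.toLp 2 ((MeasurableEquiv.piFinSuccAbove (fun _ => ℝ) 0).symm q))
  have hΨ : MeasurePreserving Ψ volume volume :=
    b.measurePreserving_repr_symm.comp ((PiLp.volume_preserving_toLp _).comp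
      (volume_preserving_piFinSuccAbove (fun _ : Fin (k + 1) => ℝ) 0).symm)
  have hline : ∀ t p, Ψ (t, p) = Ψ (0, p) + t • b 0 := by
    intro t p
    apply b.repr.injective
    ext i
    cases i using Fin.cases <;> simp [Ψ, b.repr_self]
  have horth : ∀ p, ⟪Ψ (0, p), b 0⟫ = 0 := by
    intro p
    rw [real_inner_comm, ← b.repr_apply_apply]
    simp [Ψ]
  have hslices : ∀ C, MeasurableSet C →
      volume C = ∫⁻ p, volume {t : ℝ | Ψ (0, p) + t • b 0 ∈ C} := by
    intro C hC
    rw [← hΨ.measure_preimage hC.nullMeasurableSet, Measure.volume_eq_prod,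
      Measure.prod_apply_symm (hΨ.measurable hC)]
    simp_rw [← hline]
    rfl
  rw [hslices A hA, hslices B hB]
  exact lintegral_mono fun p => h _ (horth p)

theorem volume_slab_slice_le {u : ℝⁿ} (hu : ‖u‖ = 1) {x y : ℝⁿ} (hy : ⟪y, u⟫ = 0) {ρ r : ℝ}
    {G : Set ℝⁿ} (hneg : ∀ z ∉ closedBall x (ρ - r), ⟪z, u⟫ < 0 → z ∈ G)
    (hpos : ∀ z ∈ G, z ∉ closedBall x (ρ - r) → ⟪z, u⟫ ≤ 0)
    (hfr : ∀ z ∈ frontier G, z ∉ closedBall x (ρ - r) → ⟪z, u⟫ = 0) :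
    volume {t : ℝ | y + t • u ∈ {z | |⟪z, u⟫| < r} ∩ ball x ρ} ≤
      volume {t : ℝ | y + t • u ∈ thickening r (frontier G) ∩ ball x ρ} := by
  have hinner : ∀ t : ℝ, ⟪y + t • u, u⟫ = t := fun t => by
    rw [inner_add_left, real_inner_smul_left, real_inner_self_eq_norm_sq, hu, hy]
    ring
  have hdist : ∀ s t : ℝ, dist (y + s • u) (y + t • u) = |s - t| := fun s t => by
    rw [dist_add_left, dist_eq_norm, ← sub_smul, norm_smul, hu, mul_one, Real.norm_eq_abs]
  have hfar : ∀ t, ρ - r < |t - ⟪x, u⟫| → y + t • u ∉ closedBall x (ρ - r) := fun t ht hK => by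
    have := (abs_inner_sub_inner_le_dist hu _ x).trans (mem_closedBall.1 hK)
    rw [hinner] at this
    linarith
  set c := |⟪x, u⟫| + |ρ - r| + 1
  have hc : 0 < c := by positivity
  have hfar_neg : y + (-c) • u ∉ closedBall x (ρ - r) := hfar _ (by
    rw [abs_sub_comm]
    linarith [le_abs_self (⟪x, u⟫ - -c), neg_abs_le ⟪x, u⟫, le_abs_self (ρ - r)])
  have hfar_pos : y + c • u ∉ closedBall x (ρ - r) := hfar _ (by
    linarith [le_abs_self (c - ⟪x, u⟫), le_abs_self ⟪x, u⟫, le_abs_self (ρ - r)])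
  obtain ⟨t₀, ht₀⟩ := exists_mem_frontier_of_continuous (f := fun t : ℝ => y + t • u)
    (by fun_prop) (hneg _ hfar_neg (by rw [hinner]; linarith))
    (fun h => (hpos _ h hfar_pos).not_gt (by rw [hinner]; exact hc))
  by_cases hK : y + t₀ • u ∈ closedBall x (ρ - r)
  · calc volume {t : ℝ | y + t • u ∈ {z | |⟪z, u⟫| < r} ∩ ball x ρ}
        ≤ volume (Ioo (-r) r) := measure_mono fun t ht => abs_lt.1 (hinner t ▸ ht.1)
      _ = volume (Ioo (t₀ - r) (t₀ + r)) := by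
          simp only [Real.volume_Ioo]
          ring_nf
      _ ≤ volume {t : ℝ | y + t • u ∈ thickening r (frontier G) ∩ ball x ρ} :=
          measure_mono fun s hs => by
            have hs' : dist (y + s • u) (y + t₀ • u) < r := by
              rw [hdist, abs_lt]
              constructor <;> linarith [hs.1, hs.2]
            refine ⟨mem_thickening_iff.2 ⟨_, ht₀, hs'⟩, ?_⟩
            rw [mem_ball]
            linarith [dist_triangle (y + s • u) (y + t₀ • u) x, mem_closedBall.1 hK]
  · obtain rfl : t₀ = 0 := hinner t₀ ▸ hfr _ ht₀ hK
    refine measure_mono fun t ht => ⟨mem_thickening_iff.2 ⟨_, ht₀, ?_⟩, ht.2⟩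
    rw [hdist, sub_zero]
    exact hinner t ▸ ht.1

theorem perR_halfspace_le {u : ℝⁿ} (hu : ‖u‖ = 1) {x : ℝⁿ} {ρ r : ℝ} {F : Set ℝⁿ}
    (hF : F \ closedBall x (ρ - r) = {y | ⟪y, u⟫ < 0} \ closedBall x (ρ - r)) :
    perR n r {y | ⟪y, u⟫ < 0} (ball x ρ) ≤ perR n r F (ball x ρ) := by
  set E : Set ℝⁿ := {y | ⟪y, u⟫ < 0}
  set K := closedBall x (ρ - r)
  have hcont : Continuous fun z : ℝⁿ => ⟪z, u⟫ := by fun_prop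
  have hE : IsOpen E := isOpen_lt hcont continuous_const
  have hfrE : frontier (densityOnePoints n E) ⊆ {z | ⟪z, u⟫ = 0} :=
    (frontier_densityOnePoints_subset E).trans (frontier_lt_subset_eq hcont continuous_const)
  have hKc : IsOpen Kᶜ := isClosed_closedBall.isOpen_compl
  have hdens : densityOnePoints n F ∩ Kᶜ = densityOnePoints n E ∩ Kᶜ :=
    densityOnePoints_inter_eq_of_inter_eq hKc hF
  have hneg : ∀ z ∉ K, ⟪z, u⟫ < 0 → z ∈ densityOnePoints n F := fun z hzK hz =>
    (hdens ▸ ⟨interior_subset_densityOnePoints E (hE.interior_eq.symm ▸ hz), hzK⟩ :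
      z ∈ densityOnePoints n F ∩ Kᶜ).1
  have hpos : ∀ z ∈ densityOnePoints n F, z ∉ K → ⟪z, u⟫ ≤ 0 := fun z hz hzK =>
    closure_lt_subset_le hcont continuous_const
      (densityOnePoints_subset_closure E (hdens ▸ ⟨hz, hzK⟩ : z ∈ densityOnePoints n E ∩ Kᶜ).1)
  have hfr : ∀ z ∈ frontier (densityOnePoints n F), z ∉ K → ⟪z, u⟫ = 0 := fun z hz hzK => by
    have : z ∈ frontier (densityOnePoints n E) ∩ Kᶜ := by
      rw [← frontier_inter_open_inter hKc, ← hdens, frontier_inter_open_inter hKc]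
      exact ⟨hz, hzK⟩
    exact hfrE this.1
  have hslab : thickening r (frontier (densityOnePoints n E)) ⊆ {z | |⟪z, u⟫| < r} :=
    (thickening_subset_of_subset r hfrE).trans (thickening_hyperplane_subset hu r)
  refine ENNReal.div_le_div_right ?_ _
  calc volume (thickening r (frontier (densityOnePoints n E)) ∩ ball x ρ)
      ≤ volume ({z | |⟪z, u⟫| < r} ∩ ball x ρ) := measure_mono (inter_subset_inter_left _ hslab)
    _ ≤ volume (thickening r (frontier (densityOnePoints n F)) ∩ ball x ρ) :=
        volume_le_of_forall_line_slice_le hu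
          ((isOpen_lt hcont.abs continuous_const).inter isOpen_ball).measurableSet
          (isOpen_thickening.inter isOpen_ball).measurableSet
          fun y hy => volume_slab_slice_le hu hy hneg hpos hfr

theorem halfspace_classA_general (n : ℕ) (r : ℝ)
    (ω : EuclideanSpace ℝ (Fin n)) (hω : ω ≠ 0) :
    ∀ (x : EuclideanSpace ℝ (Fin n)) (ρ : ℝ), 0 < ρ →
      IsMinimizerPerR n r {y : EuclideanSpace ℝ (Fin n) | ⟪y, ω⟫ < 0} (ball x ρ) := by
  intro x ρ hρ F _ hF
  have : Nontrivial (EuclideanSpace ℝ (Fin n)) := nontrivial_of_ne ω 0 hω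
  have hE : {y : EuclideanSpace ℝ (Fin n) | ⟪y, ω⟫ < 0} = {y | ⟪y, ‖ω‖⁻¹ • ω⟫ < 0} := by
    ext y
    simp [real_inner_smul_right, mul_neg_iff, hω]
  have hu : ‖‖ω‖⁻¹ • ω‖ = 1 := by
    rw [norm_smul, norm_inv, norm_norm, inv_mul_cancel₀ (norm_ne_zero_iff.2 hω)]
  rw [hE] at hF ⊢
  apply perR_halfspace_le hu
  rw [← union_eq_right.2 (innerDomain_ball_subset_closedBall r hρ), ← sdiff_sdiff, hF, sdiff_sdiff]

/-- Half-spaces are Class A minimizers for `Per_r`: the half-space `{x · ω < 0}` is a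
minimizer of `Per_r` in every open ball of `ℝⁿ`. -/
theorem halfspace_classA (n : ℕ) (hn : 1 ≤ n) (r : ℝ) (hr : 0 < r)
    (ω : EuclideanSpace ℝ (Fin n)) (hω : ω ≠ 0) :
    ∀ (x : EuclideanSpace ℝ (Fin n)) (ρ : ℝ), 0 < ρ →
      IsMinimizerPerR n r {y : EuclideanSpace ℝ (Fin n) | ⟪y, ω⟫ < 0} (ball x ρ) :=
  halfspace_classA_general n r ω hω
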